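/- Let p ≥ 2 and n ∈ ℕ. There exists a constant C = C(n,p) > 0 such that for every ξ, η ∈ ℝ^n one has | (|ξ|−1)_+^p − (|η|−1)_+^p | ≤ C · |H_{p/2}(ξ) − H_{p/2}(η)| · ( (|ξ|−1)_+^{p/2} + (|η|−1)_+^{p/2} ). -/
import Mathlib


/-- The map `H_γ : ℝ^n → ℝ^n`, `H_γ(ξ) = (|ξ|−1)₊^γ · ξ/|ξ|` for `ξ ≠ 0`, `H_γ(0) = 0`. -/
noncomputable def Hfun {n : ℕ} (γ : ℝ) (ξ : EuclideanSpace ℝ (Fin n)) :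
    EuclideanSpace ℝ (Fin n) :=
  open Classical in
  if ξ = (0 : EuclideanSpace ℝ (Fin n)) then 0 else (max (‖ξ‖ - 1) 0) ^ γ • ‖ξ‖⁻¹ • ξ

lemma norm_Hfun {n : ℕ} (γ : ℝ) (hγ : 0 < γ) (ξ : EuclideanSpace ℝ (Fin n)) :
    ‖Hfun γ ξ‖ = (max (‖ξ‖ - 1) 0) ^ γ := by
  unfold Hfun
  split_ifs with h
  · simp [h, Real.zero_rpow hγ.ne']
  · have hξ : ‖ξ‖ ≠ 0 := norm_ne_zero_iff.mpr h
    rw [norm_smul, norm_smul, norm_inv, norm_norm]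
    rw [inv_mul_cancel₀ hξ, mul_one, Real.norm_eq_abs,
      abs_of_nonneg (Real.rpow_nonneg (le_max_right _ _) γ)]

/-- Let `p ≥ 2` and `n ∈ ℕ`. There exists `C = C(n,p) > 0` such that
for every `ξ, η ∈ ℝ^n`,
`|(|ξ|−1)₊^p − (|η|−1)₊^p| ≤ C |H_{p/2}(ξ) − H_{p/2}(η)| ((|ξ|−1)₊^(p/2) + (|η|−1)₊^(p/2))`. -/
theorem stmt_8 (n : ℕ) (p : ℝ) (hp : 2 ≤ p) :
    ∃ C : ℝ, 0 < C ∧ ∀ ξ η : EuclideanSpace ℝ (Fin n),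
      |(max (‖ξ‖ - 1) 0) ^ p - (max (‖η‖ - 1) 0) ^ p| ≤
        C * ‖Hfun (p / 2) ξ - Hfun (p / 2) η‖ *
          ((max (‖ξ‖ - 1) 0) ^ (p / 2) + (max (‖η‖ - 1) 0) ^ (p / 2)) := by
  refine ⟨1, one_pos, fun ξ η => ?_⟩
  have hγ : (0 : ℝ) < p / 2 := by linarith
  set a := max (‖ξ‖ - 1) 0 with ha
  set b := max (‖η‖ - 1) 0 with hb
  have ha0 : 0 ≤ a := le_max_right _ _
  have hb0 : 0 ≤ b := le_max_right _ _
  set A := a ^ (p / 2) with hA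
  set B := b ^ (p / 2) with hB
  have hA0 : 0 ≤ A := Real.rpow_nonneg ha0 _
  have hB0 : 0 ≤ B := Real.rpow_nonneg hb0 _
  have hap : a ^ p = A * A := by
    rw [hA, ← Real.rpow_add' ha0 (by linarith)]
    norm_num
  have hbp : b ^ p = B * B := by
    rw [hB, ← Real.rpow_add' hb0 (by linarith)]
    norm_num
  have key : a ^ p - b ^ p = (A - B) * (A + B) := by rw [hap, hbp]; ring
  rw [key, abs_mul, abs_of_nonneg (by linarith : (0:ℝ) ≤ A + B), one_mul]
  apply mul_le_mul_of_nonneg_right _ (by linarith)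
  calc |A - B| = |‖Hfun (p/2) ξ‖ - ‖Hfun (p/2) η‖| := by
        rw [norm_Hfun _ hγ, norm_Hfun _ hγ]
    _ ≤ ‖Hfun (p/2) ξ - Hfun (p/2) η‖ := abs_norm_sub_norm_le _ _
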